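/- Consider the concatenated combination-lock MDP with c blocks of depth d. Let m_i be the number of batches used at the first time the state s0 is visited at layer i*d+1. If for each i the hidden actions of block i+1 are chosen adversarially (as a function of the first i*d hidden actions) according to the single-block lemma, then with probability at least 1 − c/K, m_{i+1} ≥ m_i + 1 for all 0 ≤ i ≤ c−1, and hence any algorithm using at most c−2 batches never visits s0 at layer cd+1 with probability at least 1 − c/K. -/

import Mathlib

open Finset
open scoped Classical

/-- A trajectory of a finite-horizon MDP: the sequence of states and of actions. -/
abbrev Traj (S A H : ℕ) := (Fin (H + 1) → Fin S) × (Fin H → Fin A)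

/-- A (stochastic, history-independent) policy. -/
abbrev Policy (S A : ℕ) := ℕ → Fin S → Fin A → ℝ

def IsPolicy (S A : ℕ) (π : Policy S A) : Prop :=
  ∀ h s, (∀ a, 0 ≤ π h s a) ∧ ∑ a, π h s a = 1

/-- Probability of a trajectory under policy `π`, model `P`, initial state `s0`. -/
noncomputable def trajProb (S A H : ℕ) (π : Policy S A)
    (P : ℕ → Fin S → Fin A → Fin S → ℝ) (s0 : Fin S) (t : Traj S A H) : ℝ :=
  (if t.1 0 = s0 then (1 : ℝ) else 0) *
    ∏ h : Fin H, (π h (t.1 h.castSucc) (t.2 h) *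
      P h (t.1 h.castSucc) (t.2 h) (t.1 h.succ))

/-- A multi-batch RL algorithm over `K` episodes: a pre-announced assignment of
episodes to `M` batches (monotone in the episode index), and, for each batch, a policy
chosen as a function of the data observed in strictly earlier batches only. -/
structure BatchAlgo (S A H K : ℕ) where
  M : ℕ
  batch : Fin K → Fin M
  mono : ∀ k k' : Fin K, k ≤ k' → batch k ≤ batch k'
  choose : Fin M → (Fin K → Traj S A H) → Policy S A
  isPolicy : ∀ m run, IsPolicy S A (choose m run)
  nonAdaptive : ∀ m run run',
    (∀ k, batch k < m → run k = run' k) → choose m run = choose m run'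

/-- Probability of a full `K`-episode run under the algorithm and the model `P`. -/
noncomputable def runProb (S A H K : ℕ) (alg : BatchAlgo S A H K)
    (P : ℕ → Fin S → Fin A → Fin S → ℝ) (s0 : Fin S)
    (run : Fin K → Traj S A H) : ℝ :=
  ∏ k : Fin K, trajProb S A H (alg.choose (alg.batch k) run) P s0 (run k)

/-- The concatenated combination-lock transition model on two states, determined by a
hidden action sequence `v`: at every layer, at state `0` the unique action `v h` keeps
the agent at state `0` and every other action sends it to the absorbing state `1`. -/
noncomputable def lockModel (A : ℕ) (v : ℕ → Fin A) :
    ℕ → Fin 2 → Fin A → Fin 2 → ℝ :=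
  fun h s a s' =>
    if s = 1 then (if s' = 1 then 1 else 0)
    else if a = v h then (if s' = 0 then 1 else 0)
    else (if s' = 1 then 1 else 0)

/-!
Draw the hidden actions uniformly at random, independently for each of the `c` blocks of `d`
layers. If some episode reaches state `0` at the last layer, then some episode `k` gets through
some block `i` although no episode of an earlier batch reached the start of that block:
otherwise, by induction on `i`, every episode in state `0` at layer `i * d` would lie in a batch
of index at least `i`, which is impossible for `i = c` with at most `c` batches. The policy of
episode `k` is computed from the earlier batches, whose trajectories died before block `i` and
so carry no information about its hidden actions; averaged over those `d` actions, it follows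
all of them with probability at most `A⁻ᵈ ≤ K⁻²`. A union bound over the `c` blocks and `K`
episodes bounds the failure probability by `c / K` on average over the hidden actions, so some
choice of hidden actions achieves this bound.
-/

open Function

namespace CombinationLock

section FunctionSums

variable {ι T : Type*} [Fintype ι] [DecidableEq ι] [Fintype T]

theorem sum_sum_update {M : Type*} [AddCommMonoid M] (φ : (ι → T) → M) (i : ι) :
    ∑ u, ∑ x, φ (update u i x) = Fintype.card T • ∑ u, φ u := by
  have hinv : Involutive fun p : (ι → T) × T => (update p.1 i p.2, p.1 i) := by
    rintro ⟨u, x⟩; simp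
  rw [← Fintype.sum_prod_type' (f := fun u x => φ (update u i x))]
  refine (Equiv.sum_comp (hinv.toPerm _) fun p => φ p.1).trans ?_
  rw [Fintype.sum_prod_type, ← sum_nsmul]
  simp

theorem sum_fun_snoc {X M : Type*} [Fintype X] [AddCommMonoid M] {n : ℕ}
    (g : (Fin (n + 1) → X) → M) :
    ∑ f, g f = ∑ f : Fin n → X, ∑ x, g (Fin.snoc f x) := by
  rw [← (Fin.snocEquiv fun _ => X).sum_comp, Fintype.sum_prod_type, sum_comm]
  rfl

noncomputable def agreeOutside (F : Finset ι) (base : ι → T) : Finset (ι → T) :=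
  univ.filter fun r => ∀ j ∉ F, r j = base j

variable {F : Finset ι} {base : ι → T}

theorem mem_agreeOutside {r : ι → T} :
    r ∈ agreeOutside F base ↔ ∀ j ∉ F, r j = base j := by
  simp [agreeOutside]

theorem agreeOutside_empty (base : ι → T) : agreeOutside ∅ base = {base} := by
  ext r; simp [mem_agreeOutside, funext_iff]

theorem sum_agreeOutside_eq_sum_sum {M : Type*} [AddCommMonoid M] {e : ι} (he : e ∈ F)
    (g : (ι → T) → M) :
    ∑ r ∈ agreeOutside F base, g r =
      ∑ t, ∑ r ∈ agreeOutside (F.erase e) (update base e t), g r := by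
  rw [← sum_fiberwise (agreeOutside F base) (fun r => r e)]
  refine sum_congr rfl fun t _ => sum_congr ?_ fun _ _ => rfl
  ext r
  simp only [mem_filter, mem_agreeOutside, mem_erase, not_and]
  constructor
  · rintro ⟨hr, rfl⟩ j hj
    by_cases hje : j = e
    · subst hje; simp
    · rw [update_of_ne hje]; exact hr j (hj hje)
  · intro hr
    have hre : r e = t := by simpa using hr e (fun h => absurd rfl h)
    refine ⟨fun j hj => ?_, hre⟩
    have hje : j ≠ e := fun h => hj (h ▸ he)
    rw [hr j (fun _ => hj), update_of_ne hje]

theorem sum_eq_sum_agreeOutside_sum {M : Type*} [AddCommMonoid M] (F : Finset ι)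
    (base : ι → T) (g : (ι → T) → M) :
    ∑ r, g r = ∑ x ∈ agreeOutside F base, ∑ r ∈ agreeOutside Fᶜ x, g r := by
  rw [← sum_fiberwise_of_maps_to (g := fun r => F.piecewise r base)
    (t := agreeOutside F base) (fun r _ => mem_agreeOutside.2 fun j hj => by simp [hj])]
  refine sum_congr rfl fun x hx => sum_congr ?_ fun _ _ => rfl
  ext r
  rw [mem_agreeOutside] at hx
  simp only [mem_filter, mem_univ, true_and, mem_agreeOutside, mem_compl, not_not, funext_iff]
  refine ⟨fun h j hj => by simpa [hj] using h j, fun h j => ?_⟩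
  by_cases hj : j ∈ F
  · simp [hj, h j hj]
  · simp [hj, hx j hj]

end FunctionSums

section AdaptedKernels

variable {ι T β : Type*} [Fintype ι] [DecidableEq ι] [Fintype T] [LinearOrder β]

def IsAdapted (rank : ι → β) (w : ι → (ι → T) → T → ℝ) : Prop :=
  ∀ j r r', (∀ j', rank j' < rank j → r j' = r' j') → w j r = w j r'

variable {rank : ι → β} {w : ι → (ι → T) → T → ℝ}

theorem sum_agreeOutside_prod_mul_of_min (hw : IsAdapted rank w) {F : Finset ι} {k : ι}
    (hk : k ∈ F) (hmin : ∀ j ∈ F, rank k ≤ rank j) (base : ι → T) (h : T → ℝ) :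
    ∑ r ∈ agreeOutside F base, (∏ j ∈ F, w j r (r j)) * h (r k) =
      ∑ t, w k base t * h t *
        ∑ r ∈ agreeOutside (F.erase k) (update base k t), ∏ j ∈ F.erase k, w j r (r j) := by
  rw [sum_agreeOutside_eq_sum_sum hk]
  refine sum_congr rfl fun t _ => ?_
  rw [mul_sum]
  refine sum_congr rfl fun r hr => ?_
  rw [mem_agreeOutside] at hr
  have hrk : r k = t := by simpa using hr k (by simp)
  have hwk : w k r = w k base := hw k r base fun j hj => by
    have hjF : j ∉ F.erase k := fun hjF => (hmin j (mem_of_mem_erase hjF)).not_gt hj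
    rw [hr j hjF, update_of_ne (ne_of_apply_ne rank hj.ne)]
  rw [← mul_prod_erase F _ hk, hrk, hwk]
  ring

theorem sum_agreeOutside_prod (hw : IsAdapted rank w) (hnorm : ∀ j r, ∑ t, w j r t = 1)
    (F : Finset ι) (base : ι → T) :
    ∑ r ∈ agreeOutside F base, ∏ j ∈ F, w j r (r j) = 1 := by
  induction F using induction_on_min_value rank generalizing base with
  | empty => simp [agreeOutside_empty]
  | insert a s ha hmin ih =>
    have hpeel := sum_agreeOutside_prod_mul_of_min hw (mem_insert_self a s)
      (by simpa using hmin) base fun _ => 1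
    simp only [mul_one] at hpeel
    simp [hpeel, erase_insert ha, ih, hnorm]

theorem sum_agreeOutside_prod_mul_apply (hw : IsAdapted rank w)
    (hnorm : ∀ j r, ∑ t, w j r t = 1) {F : Finset ι} {k : ι} (hk : k ∈ F)
    (hmin : ∀ j ∈ F, rank k ≤ rank j) (base : ι → T) (h : T → ℝ) :
    ∑ r ∈ agreeOutside F base, (∏ j ∈ F, w j r (r j)) * h (r k) =
      ∑ t, w k base t * h t := by
  simp [sum_agreeOutside_prod_mul_of_min hw hk hmin, sum_agreeOutside_prod hw hnorm]

theorem sum_prod_mul_eq_sum_agreeOutside (hw : IsAdapted rank w)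
    (hnorm : ∀ j r, ∑ t, w j r t = 1) (k : ι) (base : ι → T) {G : (ι → T) → ℝ}
    (hG : ∀ r r', (∀ j, rank j < rank k → r j = r' j) → G r = G r') (h : T → ℝ) :
    ∑ r, (∏ j, w j r (r j)) * (G r * h (r k)) =
      ∑ x ∈ agreeOutside (univ.filter fun j => rank j < rank k) base,
        (∏ j ∈ univ.filter (fun j => rank j < rank k), w j x (x j)) * G x *
          ∑ t, w k x t * h t := by
  set E := univ.filter fun j => rank j < rank k
  rw [sum_eq_sum_agreeOutside_sum E base]
  refine sum_congr rfl fun x _ => ?_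
  have hagree : ∀ r ∈ agreeOutside Eᶜ x, ∀ j, rank j < rank k → r j = x j :=
    fun r hr j hj => mem_agreeOutside.1 hr j (by simpa [E] using hj)
  have hsplit : ∀ r ∈ agreeOutside Eᶜ x, (∏ j, w j r (r j)) * (G r * h (r k)) =
      (∏ j ∈ E, w j x (x j)) * G x * ((∏ j ∈ Eᶜ, w j r (r j)) * h (r k)) := by
    intro r hr
    have hpast : ∏ j ∈ E, w j r (r j) = ∏ j ∈ E, w j x (x j) := by
      refine prod_congr rfl fun j hj => ?_
      have hjk : rank j < rank k := by simpa [E] using hj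
      rw [hagree r hr j hjk, hw j r x fun j' hj' => hagree r hr j' (hj'.trans hjk)]
    rw [← prod_mul_prod_compl E, hpast, hG r x (hagree r hr)]
    ring
  rw [sum_congr rfl hsplit, ← mul_sum,
    sum_agreeOutside_prod_mul_apply hw hnorm (by simp [E]) (fun j hj => by simpa [E] using hj)]

end AdaptedKernels

section Trajectories

variable {S A H : ℕ}

theorem sum_traj_succ (F : Traj S A (H + 1) → ℝ) :
    ∑ t, F t = ∑ t : Traj S A H, ∑ s, ∑ a, F (Fin.snoc t.1 s, Fin.snoc t.2 a) := by
  rw [Fintype.sum_prod_type, Fintype.sum_prod_type, sum_fun_snoc]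
  refine sum_congr rfl fun states _ => ?_
  rw [sum_comm, sum_fun_snoc]
  exact sum_congr rfl fun _ _ => sum_comm

theorem trajProb_snoc (π : Policy S A) (P : ℕ → Fin S → Fin A → Fin S → ℝ) (s0 : Fin S)
    (t : Traj S A H) (s : Fin S) (a : Fin A) :
    trajProb S A (H + 1) π P s0 (Fin.snoc t.1 s, Fin.snoc t.2 a) =
      trajProb S A H π P s0 t * (π H (t.1 (Fin.last H)) a * P H (t.1 (Fin.last H)) a s) := by
  have h0 : (Fin.snoc t.1 s : Fin (H + 2) → Fin S) 0 = t.1 0 := Fin.snoc_castSucc (i := 0) ..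
  simp only [trajProb, Fin.prod_univ_castSucc, Fin.snoc_castSucc, Fin.succ_castSucc,
    Fin.succ_last, Fin.snoc_last, Fin.val_castSucc, Fin.val_last, h0]
  ring

theorem sum_trajProb_succ_mul (π : Policy S A) (P : ℕ → Fin S → Fin A → Fin S → ℝ)
    (s0 : Fin S) (F : Traj S A (H + 1) → ℝ) :
    ∑ t, trajProb S A (H + 1) π P s0 t * F t =
      ∑ t : Traj S A H, trajProb S A H π P s0 t * ∑ s, ∑ a, π H (t.1 (Fin.last H)) a *
        P H (t.1 (Fin.last H)) a s * F (Fin.snoc t.1 s, Fin.snoc t.2 a) := by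
  simp_rw [sum_traj_succ, trajProb_snoc, mul_sum, mul_assoc]

variable {π : Policy S A} {P : ℕ → Fin S → Fin A → Fin S → ℝ}

theorem trajProb_nonneg (hπ : IsPolicy S A π) (hP : ∀ h s a s', 0 ≤ P h s a s') (s0 : Fin S)
    (t : Traj S A H) : 0 ≤ trajProb S A H π P s0 t :=
  mul_nonneg (by split_ifs <;> norm_num)
    (prod_nonneg fun h _ => mul_nonneg ((hπ _ _).1 _) (hP _ _ _ _))

theorem sum_trajProb_succ_mul_of_eq (hπ : IsPolicy S A π) (hP : ∀ h s a, ∑ s', P h s a s' = 1)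
    (s0 : Fin S) {F : Traj S A (H + 1) → ℝ} {G : Traj S A H → ℝ}
    (hFG : ∀ t s a, F (Fin.snoc t.1 s, Fin.snoc t.2 a) = G t) :
    ∑ t, trajProb S A (H + 1) π P s0 t * F t = ∑ t, trajProb S A H π P s0 t * G t := by
  rw [sum_trajProb_succ_mul]
  refine sum_congr rfl fun t _ => ?_
  simp_rw [hFG, sum_comm (γ := Fin S), ← sum_mul, ← mul_sum, hP, mul_one, (hπ _ _).2, one_mul]

theorem sum_trajProb (hπ : IsPolicy S A π) (hP : ∀ h s a, ∑ s', P h s a s' = 1) (s0 : Fin S) :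
    ∀ H, ∑ t, trajProb S A H π P s0 t = 1
  | 0 => by
    rw [Fintype.sum_prod_type, ← (Equiv.funUnique (Fin 1) (Fin S)).symm.sum_comp]
    simp [trajProb]
  | H + 1 => by
    simpa using (sum_trajProb_succ_mul_of_eq hπ hP s0 (F := fun _ => 1) (G := fun _ => 1)
      fun _ _ _ => rfl).trans (by simpa using sum_trajProb hπ hP s0 H)

theorem sum_prod_policy_le_one (hπ : IsPolicy S A π) (s : Fin S) (l₀ : ℕ) {d : ℕ}
    (v : (Fin d → Fin A) → ℕ → Fin A) (hblock : ∀ x (j : Fin d), v x (l₀ + j) = x j) :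
    ∑ x, ∏ h ∈ range (l₀ + d), π h s (v x h) ≤ 1 := by
  have hle_one : ∀ h a, π h s a ≤ 1 := fun h a =>
    (hπ h s).2 ▸ single_le_sum (fun a _ => (hπ h s).1 a) (mem_univ a)
  calc ∑ x, ∏ h ∈ range (l₀ + d), π h s (v x h)
      ≤ ∑ x : Fin d → Fin A, ∏ j : Fin d, π (l₀ + j) s (x j) := by
        refine sum_le_sum fun x _ => ?_
        rw [prod_range_add,
          ← Fin.prod_univ_eq_prod_range (fun j => π (l₀ + j) s (v x (l₀ + j)))]
        simp_rw [hblock]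
        exact mul_le_of_le_one_left (prod_nonneg fun j _ => (hπ _ _).1 _)
          (prod_le_one (fun h _ => (hπ h s).1 _) fun h _ => hle_one h _)
    _ = 1 := by
        rw [← Fintype.prod_sum fun (j : Fin d) a => π (l₀ + j) s a]
        simp [(hπ _ _).2]

end Trajectories

section LockModel

variable {A : ℕ} (v : ℕ → Fin A)

theorem lockModel_nonneg (h : ℕ) (s : Fin 2) (a : Fin A) (s' : Fin 2) :
    0 ≤ lockModel A v h s a s' := by
  unfold lockModel; split_ifs <;> norm_num

theorem sum_lockModel (h : ℕ) (s : Fin 2) (a : Fin A) : ∑ s', lockModel A v h s a s' = 1 := by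
  unfold lockModel; rw [Fin.sum_univ_two]; split_ifs <;> simp_all

theorem lockModel_to_zero (h : ℕ) (s : Fin 2) (a : Fin A) :
    lockModel A v h s a 0 = if s = 0 ∧ a = v h then 1 else 0 := by
  fin_cases s <;> simp [lockModel]

theorem sum_trajProb_lockModel_mul_reach {π : Policy 2 A} (hπ : IsPolicy 2 A π) :
    ∀ {H : ℕ} (l : Fin (H + 1)),
      ∑ t, trajProb 2 A H π (lockModel A v) 0 t * (if t.1 l = 0 then 1 else 0) =
        ∏ h ∈ range l, π h 0 (v h)
  | 0, l => by
    rw [Fin.fin_one_eq_zero l, Fin.val_zero, range_zero, prod_empty]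
    refine (sum_congr rfl fun t _ => ?_).trans (sum_trajProb hπ (sum_lockModel v) 0 0)
    by_cases h : t.1 0 = 0 <;> simp [trajProb, h]
  | H + 1, l => by
    induction l using Fin.lastCases with
    | last =>
      have step : ∀ t : Traj 2 A H, ∑ s, ∑ a, π H (t.1 (Fin.last H)) a *
          lockModel A v H (t.1 (Fin.last H)) a s *
            (if (Fin.snoc t.1 s : Fin (H + 2) → Fin 2) (Fin.last (H + 1)) = 0 then 1 else 0) =
          (if t.1 (Fin.last H) = 0 then 1 else 0) * π H 0 (v H) := by
        intro t
        by_cases h0 : t.1 (Fin.last H) = 0 <;> simp [h0, lockModel_to_zero]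
      rw [sum_trajProb_succ_mul]
      simp_rw [step, ← mul_assoc, ← sum_mul]
      rw [sum_trajProb_lockModel_mul_reach hπ (Fin.last H), Fin.val_last, Fin.val_last,
        prod_range_succ]
    | cast l =>
      rw [sum_trajProb_succ_mul_of_eq hπ (sum_lockModel v) 0
          (G := fun t => if t.1 l = 0 then 1 else 0)
          (fun t s a => by simp only [Fin.snoc_castSucc]),
        sum_trajProb_lockModel_mul_reach hπ l, Fin.val_castSucc]

theorem monotone_of_trajProb_lockModel_ne_zero {H : ℕ} {π : Policy 2 A} {s0 : Fin 2}
    {t : Traj 2 A H} (ht : trajProb 2 A H π (lockModel A v) s0 t ≠ 0) : Monotone t.1 := by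
  rw [Fin.monotone_iff_le_succ]
  intro h
  by_contra hlt
  have hflip : t.1 h.castSucc = 1 ∧ t.1 h.succ = 0 := by omega
  exact ht (mul_eq_zero_of_right _ (prod_eq_zero (mem_univ h) (by simp [hflip, lockModel])))

theorem trajProb_lockModel_congr {v' : ℕ → Fin A} {H : ℕ} (π : Policy 2 A) (s0 : Fin 2)
    {t : Traj 2 A H} {l : Fin (H + 1)} (hl : t.1 l = 1) (hv : ∀ h < (l : ℕ), v h = v' h) :
    trajProb 2 A H π (lockModel A v) s0 t = trajProb 2 A H π (lockModel A v') s0 t := by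
  by_cases hmono : Monotone t.1
  · unfold trajProb
    congr 1
    refine prod_congr rfl fun h _ => ?_
    by_cases hh : (h : ℕ) < l
    · simp [lockModel, hv h hh]
    · have hs : t.1 h.castSucc = 1 := by
        have := hmono (show l ≤ h.castSucc by simp [Fin.le_def]; omega)
        omega
      simp [lockModel, hs]
  · rw [not_imp_comm.1 (monotone_of_trajProb_lockModel_ne_zero v) hmono,
      not_imp_comm.1 (monotone_of_trajProb_lockModel_ne_zero v') hmono]

end LockModel

section BatchAlgorithms

variable {S A H K : ℕ} (alg : BatchAlgo S A H K) (P : ℕ → Fin S → Fin A → Fin S → ℝ)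
  (s0 : Fin S)

theorem isAdapted_trajProb_choose :
    IsAdapted alg.batch fun j run => trajProb S A H (alg.choose (alg.batch j) run) P s0 :=
  fun j r r' h => by simp only [alg.nonAdaptive _ r r' h]

noncomputable def runEventProb (E : (Fin K → Traj S A H) → Prop) [DecidablePred E] : ℝ :=
  ∑ run, runProb S A H K alg P s0 run * if E run then 1 else 0

theorem runEventProb_le_sum (hP : ∀ h s a s', 0 ≤ P h s a s') {κ : Type*} (s : Finset κ)
    {E : (Fin K → Traj S A H) → Prop} [DecidablePred E]
    {F : κ → (Fin K → Traj S A H) → Prop} [∀ i, DecidablePred (F i)]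
    (hEF : ∀ run, E run → ∃ i ∈ s, F i run) :
    runEventProb alg P s0 E ≤ ∑ i ∈ s, runEventProb alg P s0 (F i) := by
  unfold runEventProb
  rw [sum_comm]
  refine sum_le_sum fun run _ => ?_
  have hp : 0 ≤ runProb S A H K alg P s0 run :=
    prod_nonneg fun j _ => trajProb_nonneg (alg.isPolicy _ _) hP s0 _
  have hterm : ∀ i ∈ s, 0 ≤ runProb S A H K alg P s0 run * if F i run then 1 else 0 :=
    fun i _ => mul_nonneg hp (by split_ifs <;> norm_num)
  by_cases hE : E run
  · obtain ⟨i, hi, hFi⟩ := hEF run hE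
    calc runProb S A H K alg P s0 run * (if E run then 1 else 0)
        = runProb S A H K alg P s0 run * if F i run then 1 else 0 := by simp [hE, hFi]
      _ ≤ _ := single_le_sum hterm hi
  · simpa [hE] using sum_nonneg hterm

def CrossesUnseen (s : Fin S) (l₀ l₁ : Fin (H + 1)) (k : Fin K) (run : Fin K → Traj S A H) :
    Prop :=
  (run k).1 l₁ = s ∧ ∀ k', alg.batch k' < alg.batch k → (run k').1 l₀ ≠ s

theorem exists_crossesUnseen {c : ℕ} (hM : alg.M ≤ c) (ℓ : ℕ → Fin (H + 1)) (s : Fin S)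
    (run : Fin K → Traj S A H) (hreach : ∃ k, (run k).1 (ℓ c) = s) :
    ∃ i < c, ∃ k, CrossesUnseen alg s (ℓ i) (ℓ (i + 1)) k run := by
  by_contra hnone
  simp only [CrossesUnseen, not_exists, not_and, not_forall, not_not] at hnone
  have hbatch : ∀ i ≤ c, ∀ k, (run k).1 (ℓ i) = s → i ≤ alg.batch k := by
    intro i
    induction i with
    | zero => simp
    | succ i ih =>
      intro hi k hk
      obtain ⟨k', hlt, hk'⟩ := hnone i (by omega) k hk
      have := ih (by omega) k' hk'
      simp only [Fin.lt_def] at hlt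
      omega
  obtain ⟨k, hk⟩ := hreach
  have := hbatch c le_rfl k hk
  have := (alg.batch k).isLt
  omega

theorem runEventProb_reach_le_sum_crossesUnseen (hP : ∀ h s a s', 0 ≤ P h s a s') {c : ℕ}
    (hM : alg.M ≤ c) (ℓ : ℕ → Fin (H + 1)) (s : Fin S) :
    runEventProb alg P s0 (fun run => ∃ k, (run k).1 (ℓ c) = s) ≤
      ∑ i ∈ range c, ∑ k,
        runEventProb alg P s0 (CrossesUnseen alg s (ℓ i) (ℓ (i + 1)) k) := by
  rw [← sum_product' (f := fun i k =>
    runEventProb alg P s0 (CrossesUnseen alg s (ℓ i) (ℓ (i + 1)) k))]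
  refine runEventProb_le_sum alg P s0 hP _ fun run hrun => ?_
  obtain ⟨i, hi, k, hk⟩ := exists_crossesUnseen alg hM ℓ s run hrun
  exact ⟨(i, k), by simpa using hi, hk⟩

end BatchAlgorithms

section SingleBlock

variable {A H K : ℕ} (alg : BatchAlgo 2 A H K)

theorem runEventProb_crossesUnseen_eq (v : ℕ → Fin A) (l₀ l₁ : Fin (H + 1)) (k : Fin K)
    (base : Fin K → Traj 2 A H) :
    runEventProb alg (lockModel A v) 0 (CrossesUnseen alg 0 l₀ l₁ k) =
      ∑ r ∈ agreeOutside (univ.filter fun j => alg.batch j < alg.batch k) base,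
        (∏ j ∈ univ.filter (fun j => alg.batch j < alg.batch k),
            trajProb 2 A H (alg.choose (alg.batch j) r) (lockModel A v) 0 (r j)) *
          (if ∀ k', alg.batch k' < alg.batch k → (r k').1 l₀ ≠ 0 then 1 else 0) *
          ∏ h ∈ range l₁, alg.choose (alg.batch k) r h 0 (v h) := by
  have hind : ∀ run : Fin K → Traj 2 A H,
      (if CrossesUnseen alg 0 l₀ l₁ k run then (1 : ℝ) else 0) =
        (if ∀ k', alg.batch k' < alg.batch k → (run k').1 l₀ ≠ 0 then 1 else 0) *
          (if (run k).1 l₁ = 0 then 1 else 0) := by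
    intro run
    rw [ite_zero_mul_ite_zero, one_mul]
    exact if_congr and_comm rfl rfl
  unfold runEventProb runProb
  simp_rw [hind]
  rw [sum_prod_mul_eq_sum_agreeOutside (isAdapted_trajProb_choose alg _ 0)
    (fun j r => sum_trajProb (alg.isPolicy _ _) (sum_lockModel v) 0 H) k base
    (G := fun r => if ∀ k', alg.batch k' < alg.batch k → (r k').1 l₀ ≠ 0 then 1 else 0)
    (fun r r' h => if_congr (forall_congr' fun k' => imp_congr_right fun hk' => by
      rw [h k' hk']) rfl rfl) fun t => if t.1 l₁ = 0 then 1 else 0]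
  simp_rw [sum_trajProb_lockModel_mul_reach v (alg.isPolicy _ _)]

theorem sum_runEventProb_crossesUnseen_le_one (k : Fin K) {d : ℕ} {l₀ l₁ : Fin (H + 1)}
    (hl : (l₁ : ℕ) = l₀ + d) (v₀ : ℕ → Fin A) (v : (Fin d → Fin A) → ℕ → Fin A)
    (hblock : ∀ x (j : Fin d), v x (l₀ + j) = x j)
    (hbelow : ∀ x, ∀ h < (l₀ : ℕ), v x h = v₀ h) :
    ∑ x, runEventProb alg (lockModel A (v x)) 0 (CrossesUnseen alg 0 l₀ l₁ k) ≤ 1 := by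
  rcases isEmpty_or_nonempty (Fin K → Traj 2 A H) with hempty | ⟨⟨base⟩⟩
  · simp [runEventProb]
  set E := univ.filter fun j => alg.batch j < alg.batch k
  set W : (ℕ → Fin A) → (Fin K → Traj 2 A H) → ℝ := fun v' r =>
    ∏ j ∈ E, trajProb 2 A H (alg.choose (alg.batch j) r) (lockModel A v') 0 (r j)
  -- Earlier batches that died before the block cannot distinguish `v x` from `v₀`.
  have hW : ∀ x r, (∀ k', alg.batch k' < alg.batch k → (r k').1 l₀ ≠ 0) →
      W (v x) r = W v₀ r :=
    fun x r hr => prod_congr rfl fun j hj => trajProb_lockModel_congr (v x) _ 0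
      (by have := hr j (by simpa [E] using hj); omega) (hbelow x)
  have hW_nonneg : ∀ r, 0 ≤ W v₀ r := fun r =>
    prod_nonneg fun j _ => trajProb_nonneg (alg.isPolicy _ _) (lockModel_nonneg v₀) 0 _
  calc ∑ x, runEventProb alg (lockModel A (v x)) 0 (CrossesUnseen alg 0 l₀ l₁ k)
      = ∑ r ∈ agreeOutside E base, ∑ x, W (v x) r *
          (if ∀ k', alg.batch k' < alg.batch k → (r k').1 l₀ ≠ 0 then 1 else 0) *
            ∏ h ∈ range l₁, alg.choose (alg.batch k) r h 0 (v x h) := by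
        simp_rw [runEventProb_crossesUnseen_eq alg _ l₀ l₁ k base]
        exact sum_comm
    _ ≤ ∑ r ∈ agreeOutside E base, W v₀ r := by
        refine sum_le_sum fun r _ => ?_
        by_cases hr : ∀ k', alg.batch k' < alg.batch k → (r k').1 l₀ ≠ 0
        · simp only [if_pos hr, mul_one, hW _ r hr, ← mul_sum, hl]
          exact mul_le_of_le_one_right (hW_nonneg r)
            (sum_prod_policy_le_one (alg.isPolicy _ r) 0 l₀ v hblock)
        · simp only [if_neg hr, mul_zero, zero_mul, sum_const_zero]
          exact hW_nonneg r
    _ = 1 := sum_agreeOutside_prod (isAdapted_trajProb_choose alg _ 0)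
        (fun j r => sum_trajProb (alg.isPolicy _ _) (sum_lockModel v₀) 0 H) E base

end SingleBlock

section BlockActions

variable {A c d : ℕ}

def blockActions (a₀ : Fin A) (u : Fin c → Fin d → Fin A) (h : ℕ) : Fin A :=
  if hh : h < c * d then
    u ⟨h / d, Nat.div_lt_of_lt_mul (by rwa [mul_comm] at hh)⟩
      ⟨h % d, Nat.mod_lt h (Nat.pos_of_ne_zero fun hd => by simp [hd] at hh)⟩
  else a₀

theorem blockActions_add (a₀ : Fin A) (u : Fin c → Fin d → Fin A) (i : Fin c) (j : Fin d) :
    blockActions a₀ u (i * d + j) = u i j := by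
  have hlt : i * d + j < c * d := by nlinarith [i.isLt, j.isLt]
  have hdiv : (i * d + j) / d = i := by
    rw [add_comm, Nat.add_mul_div_right _ _ (by omega), Nat.div_eq_of_lt j.isLt, zero_add]
  simp only [blockActions, dif_pos hlt]
  congr 1
  · exact Fin.ext hdiv
  · exact Fin.ext (by simp [Nat.mod_eq_of_lt j.isLt])

theorem blockActions_update_of_lt (a₀ : Fin A) (u : Fin c → Fin d → Fin A) (i : Fin c)
    (x : Fin d → Fin A) {h : ℕ} (hh : h < i * d) :
    blockActions a₀ (update u i x) h = blockActions a₀ u h := by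
  unfold blockActions
  split_ifs with hcd
  · rw [update_of_ne]
    intro heq
    have := Nat.div_lt_of_lt_mul (m := h) (n := d) (k := i) (by rwa [mul_comm])
    simp [Fin.ext_iff] at heq
    omega
  · rfl

def blockLayer (c d i : ℕ) : Fin (c * d + 1) :=
  ⟨min (i * d) (c * d), Nat.lt_succ_of_le (min_le_right _ _)⟩

theorem blockLayer_val {i : ℕ} (hi : i ≤ c) : (blockLayer c d i : ℕ) = i * d :=
  min_eq_left (Nat.mul_le_mul_right d hi)

theorem blockLayer_self : blockLayer c d c = Fin.last (c * d) :=
  Fin.ext (min_self _)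

variable {K : ℕ} (alg : BatchAlgo 2 A (c * d) K) (a₀ : Fin A)

theorem sum_runEventProb_blockActions_crossesUnseen_le {i : ℕ} (hi : i < c) (k : Fin K) :
    (A : ℝ) ^ d * ∑ u : Fin c → Fin d → Fin A,
        runEventProb alg (lockModel A (blockActions a₀ u)) 0
          (CrossesUnseen alg 0 (blockLayer c d i) (blockLayer c d (i + 1)) k) ≤
      Fintype.card (Fin c → Fin d → Fin A) := by
  set i' : Fin c := ⟨i, hi⟩
  have hcard : ((Fintype.card (Fin d → Fin A) : ℕ) : ℝ) = (A : ℝ) ^ d := by simp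
  rw [← hcard, ← nsmul_eq_mul, ← sum_sum_update _ i']
  calc _ ≤ ∑ _u : Fin c → Fin d → Fin A, (1 : ℝ) :=
        sum_le_sum fun u _ => sum_runEventProb_crossesUnseen_le_one alg k
          (by rw [blockLayer_val hi, blockLayer_val hi.le, Nat.succ_mul]) (blockActions a₀ u)
          (fun x => blockActions a₀ (update u i' x))
          (fun x j => by rw [blockLayer_val hi.le, blockActions_add a₀ _ i' j, update_self])
          (fun x h hh => blockActions_update_of_lt a₀ u i' x (blockLayer_val hi.le ▸ hh))
    _ = _ := by simp

theorem sum_runEventProb_blockActions_reach_le (hM : alg.M ≤ c) :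
    (A : ℝ) ^ d * ∑ u : Fin c → Fin d → Fin A,
        runEventProb alg (lockModel A (blockActions a₀ u)) 0
          (fun run => ∃ k, (run k).1 (Fin.last (c * d)) = 0) ≤
      c * K * Fintype.card (Fin c → Fin d → Fin A) := by
  simp_rw [← blockLayer_self (c := c) (d := d)]
  calc _ ≤ (A : ℝ) ^ d * ∑ u : Fin c → Fin d → Fin A, ∑ i ∈ range c, ∑ k,
          runEventProb alg (lockModel A (blockActions a₀ u)) 0
            (CrossesUnseen alg 0 (blockLayer c d i) (blockLayer c d (i + 1)) k) := by
        gcongr with u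
        exact runEventProb_reach_le_sum_crossesUnseen alg _ 0 (lockModel_nonneg _) hM _ 0
    _ = ∑ i ∈ range c, ∑ k, (A : ℝ) ^ d * ∑ u : Fin c → Fin d → Fin A,
          runEventProb alg (lockModel A (blockActions a₀ u)) 0
            (CrossesUnseen alg 0 (blockLayer c d i) (blockLayer c d (i + 1)) k) := by
        simp_rw [mul_sum]
        rw [sum_comm]
        exact sum_congr rfl fun i _ => sum_comm
    _ ≤ ∑ i ∈ range c, ∑ _k : Fin K, (Fintype.card (Fin c → Fin d → Fin A) : ℝ) :=
        sum_le_sum fun i hi => sum_le_sum fun k _ =>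
          sum_runEventProb_blockActions_crossesUnseen_le alg a₀ (mem_range.1 hi) k
    _ = _ := by simp [mul_assoc]

end BlockActions

theorem natCast_sq_le_pow_floor_logb {A : ℕ} (hA : 1 < A) (K : ℕ) :
    (K : ℝ) ^ 2 ≤ (A : ℝ) ^ (⌊2 * Real.logb A K⌋₊ + 2) := by
  rcases Nat.eq_zero_or_pos K with rfl | hK
  · simp
  rw [← Real.rpow_natCast (A : ℝ),
    ← Real.logb_le_iff_le_rpow (by exact_mod_cast hA) (by positivity), Real.logb_pow]
  push_cast
  linarith [Nat.lt_floor_add_one (2 * Real.logb A K)]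

end CombinationLock

open CombinationLock in
theorem stmt12_general (A d c K : ℕ) (hA : 2 ≤ A)
    (hd : d = Nat.floor (2 * Real.logb A K) + 2)
    (alg : BatchAlgo 2 A (c * d) K) (hM : alg.M ≤ c - 2) :
    ∃ v : ℕ → Fin A,
      ∑ run : Fin K → Traj 2 A (c * d),
          runProb 2 A (c * d) K alg (lockModel A v) 0 run *
            (if ∃ k : Fin K, (run k).1 (Fin.last (c * d)) = 0 then 1 else 0)
        ≤ (c : ℝ) / K := by
  set a₀ : Fin A := ⟨0, by omega⟩
  set N : ℝ := (Fintype.card (Fin c → Fin d → Fin A) : ℝ)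
  have hX : (0 : ℝ) < (A : ℝ) ^ d := by positivity
  have hK2 : (K : ℝ) ^ 2 ≤ (A : ℝ) ^ d := hd ▸ natCast_sq_le_pow_floor_logb (by omega) K
  have havg := sum_runEventProb_blockActions_reach_le alg a₀ (by omega)
  have hsum : ∑ u : Fin c → Fin d → Fin A,
      runEventProb alg (lockModel A (blockActions a₀ u)) 0
        (fun run => ∃ k, (run k).1 (Fin.last (c * d)) = 0) ≤
      ∑ _u : Fin c → Fin d → Fin A, (c : ℝ) / K := by
    rw [sum_const, card_univ, nsmul_eq_mul]
    calc _ ≤ c * K * N / (A : ℝ) ^ d := by rw [le_div_iff₀ hX]; linarith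
      _ ≤ N * (c / K) := by
        rcases (Nat.cast_nonneg (α := ℝ) K).eq_or_lt with hK0 | hK0
        · simp [← hK0]
        rw [div_le_iff₀ hX]
        calc (c : ℝ) * K * N = N * (c / K) * K ^ 2 := by field_simp
          _ ≤ N * (c / K) * (A : ℝ) ^ d := by gcongr
  have : Nonempty (Fin A) := ⟨a₀⟩
  obtain ⟨u, -, hu⟩ := exists_le_of_sum_le univ_nonempty hsum
  exact ⟨blockActions a₀ u, hu⟩

/-- **Recursive batch-counting lower bound for the concatenated combination lock.**
Consider the two-state MDP consisting of `c` combination-lock blocks of depth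
`d = ⌊2 log_A K⌋ + 2` (horizon `H = c·d`), with hidden action sequence `v`. Any
multi-batch algorithm using at most `c − 2` batches admits an adversarial choice of `v`
such that the probability that some episode ever visits state `s0 = 0` at layer
`c·d + 1` (i.e. at the end of the horizon) is at most `c / K`; equivalently, with
probability at least `1 − c/K` the algorithm never reaches the reward-bearing segment. -/
theorem stmt12 (A d c K : ℕ) (hA : 2 ≤ A) (hK : 1 ≤ K) (hc : 1 ≤ c)
    (hd : d = Nat.floor (2 * Real.logb A K) + 2)
    (alg : BatchAlgo 2 A (c * d) K) (hM : alg.M ≤ c - 2) :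
    ∃ v : ℕ → Fin A,
      ∑ run : Fin K → Traj 2 A (c * d),
          runProb 2 A (c * d) K alg (lockModel A v) 0 run *
            (if ∃ k : Fin K, (run k).1 (Fin.last (c * d)) = 0 then 1 else 0)
        ≤ (c : ℝ) / K :=
  stmt12_general A d c K hA hd alg hM
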